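/- arXiv:2001.05072 — 2 statements merged into one kernel-verified Lean document; each statement's English description precedes it below -/
import Mathlib

section
/- Let τ₁, τ₂, v₁, v₂, w₁, w₂ be real numbers. Define the numerical fluxes v* = (v₁+v₂)/2 − τ₁(w₁+w₂), w₁* = (w₁−w₂)/2 − τ₂(v₁−v₂), and w₂* = (w₂−w₁)/2 − τ₂(v₂−v₁). Then the total face contribution to the discrete energy rate satisfies the identity w₁(v* − v₁) + w₂(v* − v₂) + v₁ w₁* + v₂ w₂* = −τ₁(w₁+w₂)² − τ₂(v₁−v₂)². In particular, if τ₁ ≥ 0 and τ₂ ≥ 0, this quantity is ≤ 0. -/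
/-! The central parts of the fluxes cancel the volume terms exactly (this is where the two
outward normals enter with opposite signs), so only the two penalty terms survive, each a
parameter times a square. -/

theorem face_energy_rate_eq {K : Type*} [Field K] [NeZero (2 : K)] (τ₁ τ₂ v₁ v₂ w₁ w₂ : K) :
    w₁ * ((v₁ + v₂) / 2 - τ₁ * (w₁ + w₂) - v₁) + w₂ * ((v₁ + v₂) / 2 - τ₁ * (w₁ + w₂) - v₂)
        + v₁ * ((w₁ - w₂) / 2 - τ₂ * (v₁ - v₂)) + v₂ * ((w₂ - w₁) / 2 - τ₂ * (v₂ - v₁))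
      = -τ₁ * (w₁ + w₂) ^ 2 - τ₂ * (v₁ - v₂) ^ 2 := by
  field_simp
  ring

theorem neg_mul_sq_sub_mul_sq_nonpos {R : Type*} [CommRing R] [LinearOrder R]
    [IsStrictOrderedRing R] {a b : R} (ha : 0 ≤ a) (hb : 0 ≤ b) (x y : R) :
    -a * x ^ 2 - b * y ^ 2 ≤ 0 := by
  have hx := mul_nonneg ha (sq_nonneg x)
  have hy := mul_nonneg hb (sq_nonneg y)
  linear_combination hx + hy

/-- The face contribution to the discrete energy rate of the energy-based DG method
with upwind-type fluxes equals −τ₁(w₁+w₂)² − τ₂(v₁−v₂)², and is ≤ 0 for τ₁, τ₂ ≥ 0. -/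
theorem dg_face_energy_contribution
    (τ₁ τ₂ v₁ v₂ w₁ w₂ vstar w₁star w₂star : ℝ)
    (hv : vstar = (v₁ + v₂) / 2 - τ₁ * (w₁ + w₂))
    (hw₁ : w₁star = (w₁ - w₂) / 2 - τ₂ * (v₁ - v₂))
    (hw₂ : w₂star = (w₂ - w₁) / 2 - τ₂ * (v₂ - v₁)) :
    w₁ * (vstar - v₁) + w₂ * (vstar - v₂) + v₁ * w₁star + v₂ * w₂star
      = -τ₁ * (w₁ + w₂) ^ 2 - τ₂ * (v₁ - v₂) ^ 2
    ∧ (0 ≤ τ₁ → 0 ≤ τ₂ →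
        w₁ * (vstar - v₁) + w₂ * (vstar - v₂) + v₁ * w₁star + v₂ * w₂star ≤ 0) := by
  subst hv hw₁ hw₂
  have h_eq := face_energy_rate_eq τ₁ τ₂ v₁ v₂ w₁ w₂
  exact ⟨h_eq, fun h₁ h₂ => h_eq ▸ neg_mul_sq_sub_mul_sq_nonpos h₁ h₂ _ _⟩
end

section
/- Let h_x > 0, h_y > 0, Δt > 0, c ∈ ℝ, and fix a center (x_c, y_c) ∈ ℝ² and time t_n ∈ ℝ. Let (û_{k,l,s}) and (v̂_{k,l,s}) be finitely supported families of real coefficients and define the polynomials p(x,y,t) = Σ_{k,l,s} û_{k,l,s} ((x−x_c)/h_x)^k ((y−y_c)/h_y)^l ((t−t_n)/Δt)^s and q(x,y,t) = Σ_{k,l,s} v̂_{k,l,s} ((x−x_c)/h_x)^k ((y−y_c)/h_y)^l ((t−t_n)/Δt)^s. If ∂ₜp = q and ∂ₜq = c² (∂ₓₓp + ∂_{yy}p) hold identically on ℝ³, then for all natural numbers k, l, s: (s+1) û_{k,l,s+1} = Δt v̂_{k,l,s} and (s+1) v̂_{k,l,s+1} = c² (k+2)(k+1) (Δt/h_x²)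 û_{k+2,l,s} + c² (l+2)(l+1) (Δt/h_y²) û_{k,l+2,s}. -/
/-!
The coefficient families are the coefficients of polynomials `P` and `Q` in three variables, and
`p`, `q` are `P`, `Q` evaluated at the scaled variables `((x - x_c)/h_x, (y - y_c)/h_y, (t - t_n)/Δt)`.
Differentiating in one variable amounts to taking the corresponding partial derivative of the
polynomial and dividing by the grid spacing, so the two differential equations become the
polynomial identities `Δt⁻¹ ∂_T P = Q` and `Δt⁻¹ ∂_T Q = c² (h_x⁻² ∂_X² P + h_y⁻² ∂_Y² P)`: over an
infinite field a polynomial is determined by its values. Comparing the coefficients of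
`X^k Y^l T^s` gives the recursion.
-/

open Function MvPolynomial

@[simps]
noncomputable def Finsupp.equivProdFinThree (M : Type*) [Zero M] : (Fin 3 →₀ M) ≃ M × M × M where
  toFun m := (m 0, m 1, m 2)
  invFun e := Finsupp.equivFunOnFinite.symm ![e.1, e.2.1, e.2.2]
  left_inv m := by ext j; fin_cases j <;> rfl
  right_inv e := rfl

namespace MvPolynomial

section Calculus

variable {σ 𝕜 : Type*} [NontriviallyNormedField 𝕜]

theorem eq_of_eval_affine_eq {P Q : MvPolynomial σ 𝕜} {c h : σ → 𝕜} (hh : ∀ j, h j ≠ 0)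
    (hPQ : ∀ r : σ → 𝕜,
      eval (fun j => (r j - c j) / h j) P = eval (fun j => (r j - c j) / h j) Q) :
    P = Q :=
  MvPolynomial.funext fun x => by simpa [hh] using hPQ fun j => c j + h j * x j

variable [DecidableEq σ]

theorem hasDerivAt_eval_update (P : MvPolynomial σ 𝕜) (r : σ → 𝕜) (i : σ) (x : 𝕜) :
    HasDerivAt (fun τ => eval (update r i τ) P) (eval (update r i x) (pderiv i P)) x := by
  induction P using MvPolynomial.induction_on with
  | C a => simpa using hasDerivAt_const x a
  | add P Q hP hQ => simpa using hP.fun_add hQ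
  | mul_X P j hP =>
    rcases eq_or_ne j i with rfl | hji
    · simp only [pderiv_mul, map_add, map_mul, eval_X, update_self, pderiv_X_self, map_one]
      refine (hP.fun_mul (hasDerivAt_id' x)).congr_deriv ?_
      ring
    · simp only [pderiv_mul, map_add, map_mul, eval_X, update_of_ne hji, pderiv_X_of_ne hji,
        map_zero, mul_zero]
      refine (hP.fun_mul (hasDerivAt_const x (r j))).congr_deriv ?_
      ring

theorem hasDerivAt_eval_affine_update (P : MvPolynomial σ 𝕜) (c h r : σ → 𝕜) (i : σ) (x : 𝕜) :
    HasDerivAt (fun τ => eval (fun j => (update r i τ j - c j) / h j) P)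
      (eval (fun j => (update r i x j - c j) / h j) ((h i)⁻¹ • pderiv i P)) x := by
  have hscale : HasDerivAt (fun τ => (τ - c i) / h i) (h i)⁻¹ x := by
    simpa using ((hasDerivAt_id' x).sub_const (c i)).div_const (h i)
  have hupdate (τ : 𝕜) : (fun j => (update r i τ j - c j) / h j)
      = update (fun j => (r j - c j) / h j) i ((τ - c i) / h i) :=
    _root_.funext (apply_update (fun j y => (y - c j) / h j) r i τ)
  simp only [hupdate, smul_eval]
  exact ((hasDerivAt_eval_update P _ i _).comp x hscale).congr_deriv (mul_comm _ _)

end Calculus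

section ThreeVariables

variable {R : Type*} [CommSemiring R]

noncomputable def ofCoeff3 (a : ℕ → ℕ → ℕ → R)
    (ha : (Function.support fun e : ℕ × ℕ × ℕ => a e.1 e.2.1 e.2.2).Finite) :
    MvPolynomial (Fin 3) R :=
  AddMonoidAlgebra.ofCoeff <| Finsupp.ofSupportFinite (fun m => a (m 0) (m 1) (m 2))
    (ha.preimage (Finsupp.equivProdFinThree ℕ).injective.injOn)

theorem coeff_ofCoeff3 (a : ℕ → ℕ → ℕ → R)
    (ha : (Function.support fun e : ℕ × ℕ × ℕ => a e.1 e.2.1 e.2.2).Finite) (m : Fin 3 →₀ ℕ) :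
    coeff m (ofCoeff3 a ha) = a (m 0) (m 1) (m 2) :=
  rfl

theorem eval_ofCoeff3 (a : ℕ → ℕ → ℕ → R)
    (ha : (Function.support fun e : ℕ × ℕ × ℕ => a e.1 e.2.1 e.2.2).Finite) (x : Fin 3 → R) :
    eval x (ofCoeff3 a ha)
      = ∑ᶠ (k : ℕ) (l : ℕ) (s : ℕ), a k l s * x 0 ^ k * x 1 ^ l * x 2 ^ s := by
  rw [← finsum_curry₃ (fun e => a e.1 e.2.1 e.2.2 * x 0 ^ e.1 * x 1 ^ e.2.1 * x 2 ^ e.2.2)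
      (ha.subset fun e he hae => he (by simp [hae])),
    ← finsum_comp_equiv (Finsupp.equivProdFinThree ℕ), eval_eq',
    finsum_eq_sum_of_support_subset (s := (ofCoeff3 a ha).support)]
  · simp [Fin.prod_univ_three, coeff_ofCoeff3, mul_assoc]
  · refine fun m hm => mem_support_iff.mpr fun ham => hm ?_
    rw [coeff_ofCoeff3] at ham
    simp [ham]

end ThreeVariables

end MvPolynomial

section ScaledEval

variable {𝕜 : Type*} [NontriviallyNormedField 𝕜]

noncomputable def scaledEval (P : MvPolynomial (Fin 3) 𝕜) (c h : Fin 3 → 𝕜) (x y t : 𝕜) : 𝕜 :=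
  eval (fun j => (![x, y, t] j - c j) / h j) P

theorem eq_of_scaledEval_eq {P Q : MvPolynomial (Fin 3) 𝕜} {c h : Fin 3 → 𝕜} (hh : ∀ j, h j ≠ 0)
    (hPQ : ∀ x y t, scaledEval P c h x y t = scaledEval Q c h x y t) : P = Q := by
  refine eq_of_eval_affine_eq (c := c) hh fun r => ?_
  have hr : ![r 0, r 1, r 2] = r := by ext j; fin_cases j <;> rfl
  simpa only [scaledEval, hr] using hPQ (r 0) (r 1) (r 2)

theorem scaledEval_ofCoeff3 (a : ℕ → ℕ → ℕ → 𝕜)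
    (ha : (Function.support fun e : ℕ × ℕ × ℕ => a e.1 e.2.1 e.2.2).Finite)
    (xc yc tn hx hy Δt x y t : 𝕜) :
    scaledEval (ofCoeff3 a ha) ![xc, yc, tn] ![hx, hy, Δt] x y t
      = ∑ᶠ (k : ℕ) (l : ℕ) (s : ℕ),
          a k l s * ((x - xc) / hx) ^ k * ((y - yc) / hy) ^ l * ((t - tn) / Δt) ^ s :=
  eval_ofCoeff3 a ha _

variable (P : MvPolynomial (Fin 3) 𝕜) (c h : Fin 3 → 𝕜) (x y t : 𝕜)

theorem deriv_scaledEval_x :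
    deriv (fun ξ => scaledEval P c h ξ y t) x = scaledEval ((h 0)⁻¹ • pderiv 0 P) c h x y t := by
  have hfun (R : MvPolynomial (Fin 3) 𝕜) : (fun ξ => scaledEval R c h ξ y t)
      = fun ξ => eval (fun j => (update ![x, y, t] 0 ξ j - c j) / h j) R := by
    funext ξ
    have hvec : ![ξ, y, t] = update ![x, y, t] 0 ξ := by ext j; fin_cases j <;> rfl
    rw [scaledEval, hvec]
  rw [hfun P, congrFun (hfun _) x]
  exact (hasDerivAt_eval_affine_update P c h ![x, y, t] 0 x).deriv

theorem deriv_scaledEval_y :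
    deriv (fun η => scaledEval P c h x η t) y = scaledEval ((h 1)⁻¹ • pderiv 1 P) c h x y t := by
  have hfun (R : MvPolynomial (Fin 3) 𝕜) : (fun η => scaledEval R c h x η t)
      = fun η => eval (fun j => (update ![x, y, t] 1 η j - c j) / h j) R := by
    funext η
    have hvec : ![x, η, t] = update ![x, y, t] 1 η := by ext j; fin_cases j <;> rfl
    rw [scaledEval, hvec]
  rw [hfun P, congrFun (hfun _) y]
  exact (hasDerivAt_eval_affine_update P c h ![x, y, t] 1 y).deriv

theorem deriv_scaledEval_t :
    deriv (fun τ => scaledEval P c h x y τ) t = scaledEval ((h 2)⁻¹ • pderiv 2 P) c h x y t := by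
  have hfun (R : MvPolynomial (Fin 3) 𝕜) : (fun τ => scaledEval R c h x y τ)
      = fun τ => eval (fun j => (update ![x, y, t] 2 τ j - c j) / h j) R := by
    funext τ
    have hvec : ![x, y, τ] = update ![x, y, t] 2 τ := by ext j; fin_cases j <;> rfl
    rw [scaledEval, hvec]
  rw [hfun P, congrFun (hfun _) t]
  exact (hasDerivAt_eval_affine_update P c h ![x, y, t] 2 t).deriv

end ScaledEval

/-- Two-dimensional Hermite method recursion relations for the scaled space–time
Taylor coefficients: if p, q satisfy ∂ₜp = q and ∂ₜq = c² (∂ₓₓp + ∂_yy p)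
identically, then (s+1) û_{k,l,s+1} = Δt v̂_{k,l,s} and
(s+1) v̂_{k,l,s+1} = c²(k+2)(k+1)(Δt/hₓ²) û_{k+2,l,s} + c²(l+2)(l+1)(Δt/h_y²) û_{k,l+2,s}. -/
theorem hermite_taylor_recursion_2d
    (hx hy Δt : ℝ) (hhx : 0 < hx) (hhy : 0 < hy) (hΔt : 0 < Δt) (c : ℝ)
    (xc yc tn : ℝ)
    (uhat vhat : ℕ → ℕ → ℕ → ℝ)
    (hus : (Function.support fun p : ℕ × ℕ × ℕ => uhat p.1 p.2.1 p.2.2).Finite)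
    (hvs : (Function.support fun p : ℕ × ℕ × ℕ => vhat p.1 p.2.1 p.2.2).Finite)
    (p q : ℝ → ℝ → ℝ → ℝ)
    (hp : ∀ x y t, p x y t = ∑ᶠ (k : ℕ) (l : ℕ) (s : ℕ),
        uhat k l s * ((x - xc) / hx) ^ k * ((y - yc) / hy) ^ l * ((t - tn) / Δt) ^ s)
    (hq : ∀ x y t, q x y t = ∑ᶠ (k : ℕ) (l : ℕ) (s : ℕ),
        vhat k l s * ((x - xc) / hx) ^ k * ((y - yc) / hy) ^ l * ((t - tn) / Δt) ^ s)
    (eq1 : ∀ x y t, deriv (fun τ => p x y τ) t = q x y t)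
    (eq2 : ∀ x y t, deriv (fun τ => q x y τ) t
        = c ^ 2 * (deriv (fun ξ => deriv (fun ζ => p ζ y t) ξ) x
            + deriv (fun η => deriv (fun ζ => p x ζ t) η) y)) :
    ∀ k l s : ℕ,
      ((s : ℝ) + 1) * uhat k l (s + 1) = Δt * vhat k l s
      ∧ ((s : ℝ) + 1) * vhat k l (s + 1)
          = c ^ 2 * ((k : ℝ) + 2) * ((k : ℝ) + 1) * (Δt / hx ^ 2) * uhat (k + 2) l s
            + c ^ 2 * ((l : ℝ) + 2) * ((l : ℝ) + 1) * (Δt / hy ^ 2) * uhat k (l + 2) s := by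
  set ctr : Fin 3 → ℝ := ![xc, yc, tn]
  set scale : Fin 3 → ℝ := ![hx, hy, Δt]
  obtain rfl : p = scaledEval (ofCoeff3 uhat hus) ctr scale :=
    funext fun x => funext fun y => funext fun t => (hp x y t).trans (scaledEval_ofCoeff3 ..).symm
  obtain rfl : q = scaledEval (ofCoeff3 vhat hvs) ctr scale :=
    funext fun x => funext fun y => funext fun t => (hq x y t).trans (scaledEval_ofCoeff3 ..).symm
  have hscale : ∀ j, scale j ≠ 0 := by
    intro j; fin_cases j <;> simp [scale, hhx.ne', hhy.ne', hΔt.ne']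
  have htime : (scale 2)⁻¹ • pderiv 2 (ofCoeff3 uhat hus) = ofCoeff3 vhat hvs :=
    eq_of_scaledEval_eq hscale fun x y t => by simpa only [deriv_scaledEval_t] using eq1 x y t
  have hwave : (scale 2)⁻¹ • pderiv 2 (ofCoeff3 vhat hvs)
      = c ^ 2 • ((scale 0)⁻¹ • pderiv 0 ((scale 0)⁻¹ • pderiv 0 (ofCoeff3 uhat hus))
        + (scale 1)⁻¹ • pderiv 1 ((scale 1)⁻¹ • pderiv 1 (ofCoeff3 uhat hus))) :=
    eq_of_scaledEval_eq hscale fun x y t => by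
      have h := eq2 x y t
      simp only [deriv_scaledEval_t, deriv_scaledEval_x, deriv_scaledEval_y] at h
      simpa only [scaledEval, map_add, smul_eval] using h
  intro k l s
  have hcoeff {P Q : MvPolynomial (Fin 3) ℝ} (hPQ : P = Q) :=
    congrArg (coeff (Finsupp.single 0 k + Finsupp.single 1 l + Finsupp.single 2 s)) hPQ
  have h1 := hcoeff htime
  have h2 := hcoeff hwave
  simp only [scale, coeff_add, coeff_smul, smul_add, Derivation.map_smul, coeff_pderiv,
    coeff_ofCoeff3, Finsupp.coe_add, Pi.add_apply, Finsupp.single_apply, smul_eq_mul,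
    Matrix.cons_val, Fin.reduceEq, if_true, if_false, add_zero, zero_add, Nat.cast_add,
    Nat.cast_one] at h1 h2
  constructor
  · field_simp at h1
    linear_combination h1
  · field_simp at h2 ⊢
    linear_combination h2
end
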